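/- arXiv:1808.09264 — 2 statements merged into one kernel-verified Lean document; each statement's English description precedes it below -/
import Mathlib

section
/- The weighted-configuration identity holds for g = 5 and w = 1: for any set S of 5 distinct real numbers, the sum over all weighted configurations of S with total weight 1 of their evaluations is zero. -/
/-!
Since `P₀ = 1`, a weighted configuration of total weight `1` is an ordered set partition
`(S₁, …, S_r)` of `S` with one marked block `B = Sⱼ`, and its evaluation is `(-1)^r / r · P₁(t_B)`.
Moving the marked block to the front is a bijection, so the `r` possible positions cancel the
factor `1/r`, and the remaining blocks form an ordered partition of `S \ B`. Peeling off the
first block shows that the signed count `∑ₖ (-1)^k` (ordered partitions of `T` into `k` blocks)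
equals `(-1)^|T|`. Hence the whole sum is `-(-1)^|S| ∑_{B ⊆ S} (-1)^|B| P₁(t_B)`, an alternating
sum over all subsets of a polynomial of degree `2` in `t_B`. Splitting off one element `a` turns
such a sum into the alternating sum over the smaller set of `p(t) - p(t + a)`, of lower degree,
so it vanishes as soon as `|S| > 2`.
-/

open Finset Polynomial

/-- The unsigned Stirling number of the first kind `[n, k]`, defined as the coefficient of
`x^k` in the ascending factorial `x (x+1) ⋯ (x+n-1)`. -/
noncomputable def stirling1 (n k : ℕ) : ℕ := (ascPochhammer ℕ n).coeff k

/-- `IsStirlingPoly P` says that for every `w`, `P w` is the (unique) real polynomial of degree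
at most `2w` with `(P w).eval n = [n, n-w]` (unsigned Stirling number of the first kind) for
every integer `n ≥ w`; i.e. `P w` plays the role of `P_w` from the paper. -/
def IsStirlingPoly (P : ℕ → Polynomial ℝ) : Prop :=
  ∀ w : ℕ, (P w).natDegree ≤ 2 * w ∧
    ∀ n : ℕ, w ≤ n → (P w).eval (n : ℝ) = (stirling1 n (n - w) : ℝ)

open scoped Classical in
/-- The sum, over all weighted configurations of the finite set `S` with total weight `w`, of
their evaluations.  A weighted configuration is recorded as a length `r` together with an
`r`-tuple `f`, where `(f i).1 = Sᵢ` are the (nonempty, pairwise disjoint, covering `S`) parts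
of the configuration and `(f i).2 = wᵢ` are their weights, `∑ i, wᵢ = w`.  Its evaluation is
`(-1)^r · (1/r) · ∏ i, P_{wᵢ}(tᵢ)` where `tᵢ = ∑ c ∈ Sᵢ, c`.  (Since the parts are nonempty and
pairwise disjoint, `r ≤ S.card`, and each weight is at most `w`, so every weighted
configuration occurs exactly once in the sum below.) -/
noncomputable def weightedConfigSum (P : ℕ → Polynomial ℝ) (S : Finset ℝ) (w : ℕ) : ℝ :=
  ∑ r ∈ Finset.range (S.card + 1),
    ∑ f ∈ (Fintype.piFinset fun _ : Fin r => S.powerset ×ˢ Finset.range (w + 1)).filter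
        (fun f => (∀ i, ((f i).1).Nonempty) ∧
          (∀ i j, i ≠ j → Disjoint (f i).1 (f j).1) ∧
          (Finset.univ.biUnion fun i => (f i).1) = S ∧
          ∑ i, (f i).2 = w),
      (-1 : ℝ) ^ r * (1 / (r : ℝ)) * ∏ i, (P (f i).2).eval (∑ c ∈ (f i).1, c)

theorem sum_powerset_neg_one_pow_card_mul_eval_sum {R : Type*} [CommRing R]
    (S : Finset R) (p : R[X]) (hp : p.natDegree < #S) :
    ∑ A ∈ S.powerset, (-1 : R) ^ #A * p.eval (∑ c ∈ A, c) = 0 := by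
  classical
  induction S using Finset.induction_on generalizing p with
  | empty => simp at hp
  | @insert a s ha ih =>
    set q := p - taylor a p with hq
    have hsplit : ∑ A ∈ (insert a s).powerset, (-1 : R) ^ #A * p.eval (∑ c ∈ A, c)
        = ∑ A ∈ s.powerset, (-1 : R) ^ #A * q.eval (∑ c ∈ A, c) := by
      rw [sum_powerset_insert ha, ← sum_add_distrib]
      refine sum_congr rfl fun A hA => ?_
      have haA : a ∉ A := fun h => ha (mem_powerset.mp hA h)
      rw [card_insert_of_notMem haA, sum_insert haA, hq, eval_sub, taylor_eval, add_comm a]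
      ring
    rw [hsplit]
    by_cases hq0 : q = 0
    · simp [hq0]
    have hp0 : p ≠ 0 := by rintro rfl; simp [hq] at hq0
    have hlt : q.degree < p.degree :=
      degree_sub_lt_left (degree_taylor p a).symm hp0 (leadingCoeff_taylor a p).symm
    rw [card_insert_of_notMem ha] at hp
    exact ih q ((natDegree_lt_natDegree hq0 hlt).trans_le (Nat.lt_succ_iff.mp hp))

theorem neg_one_pow_card_sdiff {α R : Type*} [DecidableEq α] [Monoid R] [HasDistribNeg R]
    {T B : Finset α} (h : B ⊆ T) : (-1 : R) ^ #(T \ B) = (-1) ^ #T * (-1) ^ #B := by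
  rw [← card_sdiff_add_card_eq_card h, pow_add, mul_assoc, ← pow_add, Even.neg_one_pow ⟨_, rfl⟩,
    mul_one]

theorem exists_eq_piSingle_of_sum_eq_one {ι : Type*} [Fintype ι] [DecidableEq ι] {w : ι → ℕ}
    (h : ∑ i, w i = 1) : ∃ j, w = Pi.single j 1 := by
  obtain ⟨j, hj⟩ : ∃ j, w j ≠ 0 := by
    by_contra! h0
    simp [h0] at h
  have hsplit := add_sum_erase univ w (mem_univ j)
  rw [h] at hsplit
  have hwj : w j = 1 := by omega
  have hrest : ∀ i ∈ univ.erase j, w i = 0 := sum_eq_zero_iff.mp (by omega)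
  refine ⟨j, funext fun i => ?_⟩
  rcases eq_or_ne i j with rfl | hij
  · simp [hwj]
  · simp [hij, hrest i (mem_erase.mpr ⟨hij, mem_univ i⟩)]

theorem eq_of_eval_natCast_eq {R : Type*} [CommRing R] [IsDomain R] [CharZero R] {p q : R[X]}
    (m : ℕ) (h : ∀ n, m ≤ n → p.eval (n : R) = q.eval (n : R)) : p = q := by
  refine eq_of_infinite_eval_eq p q (Set.Infinite.mono ?_
    (Set.infinite_range_of_injective ((Nat.cast_injective (R := R)).comp (add_left_injective m))))
  rintro _ ⟨n, rfl⟩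
  exact h _ (Nat.le_add_left m n)

section OrderedPartitions

variable {α : Type*} [DecidableEq α]

def orderedPartitions (S : Finset α) (r : ℕ) : Finset (Fin r → Finset α) :=
  (Fintype.piFinset fun _ => S.powerset).filter fun p =>
    (∀ i, (p i).Nonempty) ∧ (∀ i j, i ≠ j → Disjoint (p i) (p j)) ∧ univ.biUnion p = S

theorem mem_orderedPartitions {S : Finset α} {r : ℕ} {p : Fin r → Finset α} :
    p ∈ orderedPartitions S r ↔
      (∀ i, (p i).Nonempty) ∧ (∀ i j, i ≠ j → Disjoint (p i) (p j)) ∧ univ.biUnion p = S := by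
  rw [orderedPartitions, mem_filter, Fintype.mem_piFinset, and_iff_right_iff_imp]
  rintro ⟨-, -, rfl⟩ i
  exact mem_powerset.mpr (subset_biUnion_of_mem p (mem_univ i))

theorem comp_perm_mem_orderedPartitions {S : Finset α} {r : ℕ} {p : Fin r → Finset α}
    (hp : p ∈ orderedPartitions S r) (σ : Equiv.Perm (Fin r)) :
    p ∘ σ ∈ orderedPartitions S r := by
  obtain ⟨hne, hdisj, hcov⟩ := mem_orderedPartitions.mp hp
  refine mem_orderedPartitions.mpr
    ⟨fun i => hne (σ i), fun i j hij => hdisj _ _ (σ.injective.ne hij), ?_⟩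
  rw [← hcov]
  ext x
  simp only [mem_biUnion, mem_univ, true_and, Function.comp_apply]
  exact ⟨fun ⟨a, h⟩ => ⟨σ a, h⟩, fun ⟨a, h⟩ => ⟨σ.symm a, by simpa using h⟩⟩

theorem cons_mem_orderedPartitions_iff {S B : Finset α} {r : ℕ} {q : Fin r → Finset α} :
    Fin.cons B q ∈ orderedPartitions S (r + 1) ↔
      (B.Nonempty ∧ B ⊆ S) ∧ q ∈ orderedPartitions (S \ B) r := by
  have hcov : univ.biUnion (Fin.cons B q : Fin (r + 1) → Finset α) = B ∪ univ.biUnion q := by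
    ext x; simp [Fin.exists_fin_succ]
  have hsplit : (∀ i, Disjoint B (q i)) ∧ B ∪ univ.biUnion q = S ↔
      B ⊆ S ∧ univ.biUnion q = S \ B := by
    constructor
    · rintro ⟨hd, rfl⟩
      replace hd : Disjoint B (univ.biUnion q) := by simpa [disjoint_biUnion_right] using hd
      exact ⟨subset_union_left, (union_sdiff_cancel_left hd).symm⟩
    · rintro ⟨hB, hq⟩
      have hd : Disjoint B (univ.biUnion q) := hq ▸ disjoint_sdiff
      exact ⟨by simpa [disjoint_biUnion_right] using hd, hq ▸ union_sdiff_of_subset hB⟩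
  simp only [mem_orderedPartitions, Fin.forall_fin_succ, Fin.cons_zero, Fin.cons_succ, hcov,
    ne_eq, not_true, IsEmpty.forall_iff, Fin.succ_ne_zero, not_false_eq_true, forall_const,
    Fin.succ_inj, (Fin.succ_ne_zero _).symm, true_and, disjoint_comm (b := B), forall_and]
  tauto

theorem sum_orderedPartitions_succ {M : Type*} [AddCommMonoid M] (S : Finset α) (r : ℕ)
    (g : Finset α → (Fin r → Finset α) → M) :
    ∑ p ∈ orderedPartitions S (r + 1), g (p 0) (Fin.tail p) =
      ∑ B ∈ S.powerset.erase ∅, ∑ q ∈ orderedPartitions (S \ B) r, g B q := by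
  rw [sum_sigma']
  refine sum_nbij' (fun p => ⟨p 0, Fin.tail p⟩) (fun x => Fin.cons x.1 x.2) ?_ ?_ ?_ ?_ ?_
  · intro p hp
    rw [← Fin.cons_self_tail p, cons_mem_orderedPartitions_iff] at hp
    simpa [nonempty_iff_ne_empty, and_comm] using hp
  · rintro ⟨B, q⟩ hx
    simp only [mem_sigma, mem_erase, mem_powerset, ← nonempty_iff_ne_empty] at hx
    exact cons_mem_orderedPartitions_iff.mpr hx
  · intro p _
    exact Fin.cons_self_tail p
  · rintro ⟨B, q⟩ _
    simp
  · intro p _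
    rfl

theorem card_orderedPartitions_zero (T : Finset α) :
    #(orderedPartitions T 0) = if T = ∅ then 1 else 0 := by
  by_cases h : T = ∅
  · simp [orderedPartitions, h]
  · simp [orderedPartitions, h, Ne.symm h]

theorem sum_neg_one_pow_mul_card_orderedPartitions (T : Finset α) {n : ℕ} (hn : #T ≤ n) :
    ∑ k ∈ range (n + 1), (-1 : ℤ) ^ k * #(orderedPartitions T k) = (-1) ^ #T := by
  induction n generalizing T with
  | zero =>
    rw [Nat.le_zero, card_eq_zero] at hn
    simp [hn, card_orderedPartitions_zero]
  | succ n ih =>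
    have hrec : ∀ k, #(orderedPartitions T (k + 1)) =
        ∑ B ∈ T.powerset.erase ∅, #(orderedPartitions (T \ B) k) := by
      intro k
      simpa only [card_eq_sum_ones] using sum_orderedPartitions_succ T k (fun _ _ => 1)
    have hB : ∀ B ∈ T.powerset.erase ∅,
        ∑ k ∈ range (n + 1), (-1 : ℤ) ^ k * #(orderedPartitions (T \ B) k) =
          (-1) ^ #T * (-1) ^ #B := by
      intro B hB
      obtain ⟨hB0, hBT⟩ := mem_erase.mp hB
      have := card_pos.mpr (nonempty_iff_ne_empty.mpr hB0)
      rw [ih _ (by rw [card_sdiff_of_subset (mem_powerset.mp hBT)]; omega),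
        neg_one_pow_card_sdiff (mem_powerset.mp hBT)]
    have hsucc : ∑ k ∈ range (n + 1), (-1 : ℤ) ^ (k + 1) * #(orderedPartitions T (k + 1)) =
        -((-1) ^ #T * ∑ B ∈ T.powerset.erase ∅, (-1) ^ #B) := by
      simp only [hrec, Nat.cast_sum, mul_sum, pow_succ, mul_neg_one, neg_mul, sum_neg_distrib]
      rw [sum_comm, ← sum_congr rfl hB]
    rw [sum_range_succ', hsucc, sum_erase_eq_sub (empty_mem_powerset T),
      sum_powerset_neg_one_pow_card, card_orderedPartitions_zero]
    split_ifs with h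
    · simp [h]
    · simp

theorem sum_orderedPartitions_apply_eq {M : Type*} [AddCommMonoid M] (S : Finset α) {r : ℕ}
    (F : Finset α → M) (i j : Fin r) :
    ∑ p ∈ orderedPartitions S r, F (p i) = ∑ p ∈ orderedPartitions S r, F (p j) := by
  refine sum_nbij' (· ∘ Equiv.swap i j) (· ∘ Equiv.swap i j)
    (fun p hp => comp_perm_mem_orderedPartitions hp _)
    (fun p hp => comp_perm_mem_orderedPartitions hp _) ?_ ?_ ?_ <;>
  intro p _ <;> simp [Function.comp_def]

theorem sum_orderedPartitions_sum_apply {M : Type*} [AddCommMonoid M] (S : Finset α) (k : ℕ)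
    (F : Finset α → M) :
    ∑ p ∈ orderedPartitions S (k + 1), ∑ j, F (p j) =
      (k + 1) • ∑ B ∈ S.powerset.erase ∅, #(orderedPartitions (S \ B) k) • F B := by
  rw [sum_comm, sum_congr rfl fun j _ => sum_orderedPartitions_apply_eq S F j 0, sum_const,
    card_univ, Fintype.card_fin]
  congr 1
  simpa only [sum_const] using sum_orderedPartitions_succ S k fun B _ => F B

end OrderedPartitions

theorem stirling1_self (n : ℕ) : stirling1 n n = 1 := by
  simpa [stirling1, ascPochhammer_natDegree] using (monic_ascPochhammer ℕ n).coeff_natDegree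

theorem stirling1_succ_self (n : ℕ) : stirling1 (n + 1) n = (n + 1).choose 2 := by
  induction n with
  | zero => simp [stirling1]
  | succ n ih =>
    have hlead := stirling1_self (n + 1)
    unfold stirling1 at *
    rw [ascPochhammer_succ_right, mul_add, coeff_add, coeff_mul_X, ← C_eq_natCast,
      coeff_mul_C, ih, hlead, Nat.choose_succ_succ (n + 1) 1]
    simp only [Nat.cast_id, one_mul, Nat.choose_one_right, Nat.succ_eq_add_one, Nat.reduceAdd]
    omega

namespace IsStirlingPoly

variable {P : ℕ → ℝ[X]}

theorem apply_zero (hP : IsStirlingPoly P) : P 0 = 1 :=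
  eq_of_eval_natCast_eq 0 fun n hn => by simp [(hP 0).2 n hn, stirling1_self]

theorem apply_one (hP : IsStirlingPoly P) : P 1 = C (1 / 2) * (X ^ 2 - X) := by
  refine eq_of_eval_natCast_eq 1 fun n hn => ?_
  obtain ⟨n, rfl⟩ := Nat.exists_eq_add_of_le' hn
  rw [(hP 1).2 _ hn, Nat.add_sub_cancel, stirling1_succ_self, Nat.cast_choose_two]
  simp only [eval_mul, eval_C, eval_sub, eval_pow, eval_X]
  push_cast
  ring

end IsStirlingPoly

open scoped Classical in
theorem sum_weightOneConfigs_eq_sum_orderedPartitions {P : ℕ → ℝ[X]} (hP0 : P 0 = 1)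
    (S : Finset ℝ) (r : ℕ) :
    ∑ f ∈ (Fintype.piFinset fun _ : Fin r => S.powerset ×ˢ Finset.range (1 + 1)).filter
        (fun f => (∀ i, ((f i).1).Nonempty) ∧
          (∀ i j, i ≠ j → Disjoint (f i).1 (f j).1) ∧
          (Finset.univ.biUnion fun i => (f i).1) = S ∧
          ∑ i, (f i).2 = 1),
      ∏ i, (P (f i).2).eval (∑ c ∈ (f i).1, c) =
    ∑ p ∈ orderedPartitions S r, ∑ j, (P 1).eval (∑ c ∈ p j, c) := by
  rw [← sum_product']
  symm
  refine sum_bij (fun x _ i => (x.1 i, (Pi.single x.2 1 : Fin r → ℕ) i)) ?_ ?_ ?_ ?_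
  · rintro ⟨p, j⟩ hx
    obtain ⟨hne, hdisj, hcov⟩ := mem_orderedPartitions.mp (mem_product.mp hx).1
    simp only [mem_filter, Fintype.mem_piFinset, mem_product, mem_powerset, mem_range]
    refine ⟨fun i => ⟨hcov ▸ subset_biUnion_of_mem p (mem_univ i), ?_⟩, hne, hdisj, hcov, ?_⟩
    · rcases eq_or_ne i j with rfl | h <;> simp [*]
    · simp
  · rintro ⟨p₁, j₁⟩ - ⟨p₂, j₂⟩ - h
    simp only [funext_iff, Prod.ext_iff] at h
    exact Prod.ext (funext fun i => (h i).1) (by simpa [Pi.single_apply] using (h j₁).2)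
  · intro f hf
    simp only [mem_filter, Fintype.mem_piFinset] at hf
    obtain ⟨-, hne, hdisj, hcov, hw⟩ := hf
    obtain ⟨j, hj⟩ := exists_eq_piSingle_of_sum_eq_one hw
    refine ⟨(fun i => (f i).1, j),
      mem_product.mpr ⟨mem_orderedPartitions.mpr ⟨hne, hdisj, hcov⟩, mem_univ j⟩, ?_⟩
    funext i
    exact Prod.ext rfl (congrFun hj i).symm
  · rintro ⟨p, j⟩ -
    rw [prod_eq_single j]
    · simp
    · intro i _ hij
      simp [hij, hP0]
    · simp

theorem weightedConfigSum_one_eq {P : ℕ → ℝ[X]} (hP0 : P 0 = 1) (S : Finset ℝ) :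
    weightedConfigSum P S 1 =
      -(-1) ^ #S * ∑ B ∈ S.powerset.erase ∅, (-1) ^ #B * (P 1).eval (∑ c ∈ B, c) := by
  set φ : Finset ℝ → ℝ := fun B => (P 1).eval (∑ c ∈ B, c)
  have hcount : ∀ B ∈ S.powerset.erase ∅,
      ∑ k ∈ range #S, (-1 : ℝ) ^ k * #(orderedPartitions (S \ B) k) = (-1) ^ #(S \ B) := by
    intro B hB
    obtain ⟨hB0, hBS⟩ := mem_erase.mp hB
    obtain ⟨n, hn⟩ := Nat.exists_eq_add_of_lt
      (card_pos.mpr ((nonempty_iff_ne_empty.mpr hB0).mono (mem_powerset.mp hBS)))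
    have hle : #(S \ B) ≤ n := by
      have := card_pos.mpr (nonempty_iff_ne_empty.mpr hB0)
      rw [card_sdiff_of_subset (mem_powerset.mp hBS)]
      omega
    rw [hn, zero_add]
    exact_mod_cast sum_neg_one_pow_mul_card_orderedPartitions (S \ B) hle
  unfold weightedConfigSum
  simp only [← mul_sum]
  rw [sum_congr rfl fun r _ => by rw [sum_weightOneConfigs_eq_sum_orderedPartitions hP0]]
  calc ∑ r ∈ range (#S + 1), (-1) ^ r * (1 / (r : ℝ)) *
        ∑ p ∈ orderedPartitions S r, ∑ j, φ (p j)
      = ∑ k ∈ range #S, -∑ B ∈ S.powerset.erase ∅,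
          (-1) ^ k * #(orderedPartitions (S \ B) k) * φ B := by
        rw [sum_range_succ', Nat.cast_zero, div_zero, mul_zero, zero_mul, add_zero]
        refine sum_congr rfl fun k _ => ?_
        rw [sum_orderedPartitions_sum_apply, nsmul_eq_mul, mul_sum, mul_sum, ← sum_neg_distrib]
        refine sum_congr rfl fun B _ => ?_
        rw [nsmul_eq_mul]
        field_simp
        ring
    _ = -∑ B ∈ S.powerset.erase ∅, (-1) ^ #(S \ B) * φ B := by
        rw [sum_neg_distrib, sum_comm, neg_inj]
        exact sum_congr rfl fun B hB => by rw [← hcount B hB, sum_mul]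
    _ = _ := by
        rw [mul_sum, ← sum_neg_distrib]
        refine sum_congr rfl fun B hB => ?_
        rw [neg_one_pow_card_sdiff (mem_powerset.mp (mem_of_mem_erase hB))]
        ring

theorem weightedConfigSum_one_eq_zero {P : ℕ → ℝ[X]} (hP : IsStirlingPoly P) {S : Finset ℝ}
    (hS : 3 ≤ #S) : weightedConfigSum P S 1 = 0 := by
  have hdeg : (P 1).natDegree < #S := by have := (hP 1).1; omega
  rw [weightedConfigSum_one_eq hP.apply_zero, sum_erase_eq_sub (empty_mem_powerset S),
    sum_powerset_neg_one_pow_card_mul_eval_sum S _ hdeg]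
  simp [hP.apply_one]

theorem weighted_config_identity_g5_w1 (P : ℕ → Polynomial ℝ) (hP : IsStirlingPoly P)
    (S : Finset ℝ) (hS : S.card = 5) :
    weightedConfigSum P S 1 = 0 :=
  weightedConfigSum_one_eq_zero hP (by omega)
end

section
/- The weighted-configuration identity holds for g = 7 and w = 3: for any set S of 7 distinct real numbers, the sum over all weighted configurations of S with total weight 3 of their evaluations is zero. -/
open Finset Polynomial

/-!
Replace each `c ∈ S` by a variable `X c`. The sum becomes a polynomial in `|S|` variables of total
degree at most `2w`, because `deg P_u ≤ 2u`. It vanishes on each hyperplane `X c = 0`, `c ∈ S`: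
deleting `c` from its part either removes a part `{c}`, which only survives with weight `0`
because `P_0 = 1` and `P_u(0) = 0` for `u ≥ 1`, or leaves the sum of a larger part unchanged, so
the configurations of `S` with `r + 1` parts contribute `(r + 1)` times those of `S \ {c}` with
`r` or `r + 1` parts, and the alternating sum over `r` with the weights `1 / r` telescopes to `0`.
A polynomial of total degree `< |S|` vanishing on all these hyperplanes is zero: each of its
monomials would have to contain every variable `X c`, `c ∈ S`.
-/

theorem stirling1_succ_succ (n k : ℕ) :
    stirling1 (n + 1) (k + 1) = n * stirling1 n (k + 1) + stirling1 n k := by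
  rw [stirling1, stirling1, stirling1, ascPochhammer_succ_right, mul_add, coeff_add,
    ← C_eq_natCast, coeff_mul_C, coeff_mul_X, Nat.cast_id]
  ring

theorem stirling1_succ_zero (n : ℕ) : stirling1 (n + 1) 0 = 0 := by
  simp [stirling1, coeff_zero_eq_eval_zero]

namespace IsStirlingPoly

variable {P : ℕ → ℝ[X]}

/-- The recurrence `[n+1, k+1] = n [n, k+1] + [n, k]`, read along the diagonals `k = n - w`. -/
theorem comp_X_add_one (hP : IsStirlingPoly P) (w : ℕ) :
    (P (w + 1)).comp (X + 1) = X * P w + P (w + 1) := by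
  refine eq_of_infinite_eval_eq _ _ (Set.infinite_of_injective_forall_mem
    (f := fun n : ℕ => ((n + w + 1 : ℕ) : ℝ)) (fun a b h => by simpa using h) fun n => ?_)
  have hsucc := (hP (w + 1)).2 (n + w + 1 + 1) (by omega)
  have hw := (hP w).2 (n + w + 1) (by omega)
  have hw1 := (hP (w + 1)).2 (n + w + 1) (by omega)
  rw [show n + w + 1 + 1 - (w + 1) = n + 1 by omega] at hsucc
  rw [show n + w + 1 - w = n + 1 by omega] at hw
  rw [show n + w + 1 - (w + 1) = n by omega] at hw1
  show eval _ (comp _ _) = eval _ _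
  simp only [eval_comp, eval_add, eval_mul, eval_X, eval_one]
  push_cast at hsucc hw hw1 ⊢
  rw [hsucc, hw, hw1, stirling1_succ_succ]
  push_cast
  ring

/-- At `w + 1` this is `[w + 1, 0] = 0`; by `comp_X_add_one` the values at `k` and `k + 1` differ
by `k P_w(k)`, which vanishes by induction on `w`. -/
theorem eval_natCast_eq_zero (hP : IsStirlingPoly P) {w k : ℕ} (hk : k ≤ w + 1) :
    (P (w + 1)).eval (k : ℝ) = 0 := by
  have hstep (j : ℕ) : (P (w + 1)).eval (j : ℝ) =
      (P (w + 1)).eval ((j + 1 : ℕ) : ℝ) - j * (P w).eval (j : ℝ) := by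
    have := congrArg (eval (j : ℝ)) (hP.comp_X_add_one w)
    simp only [eval_comp, eval_add, eval_mul, eval_X, eval_one] at this
    push_cast
    linarith
  have hlow : ∀ j < w + 1, (j : ℝ) * (P w).eval (j : ℝ) = 0 := by
    cases w with
    | zero => intro j hj; simp [show j = 0 by omega]
    | succ w => intro j hj; rw [hP.eval_natCast_eq_zero (w := w) (by omega), mul_zero]
  induction hk using Nat.decreasingInduction with
  | self => simpa [stirling1_succ_zero] using (hP (w + 1)).2 (w + 1) le_rfl
  | of_succ k hk ih => rw [hstep, ih, hlow k hk, sub_zero]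

theorem eval_zero_of_ne_zero (hP : IsStirlingPoly P) {w : ℕ} (hw : w ≠ 0) :
    (P w).eval 0 = 0 := by
  obtain ⟨w, rfl⟩ := Nat.exists_eq_succ_of_ne_zero hw
  exact_mod_cast hP.eval_natCast_eq_zero (Nat.zero_le _)

end IsStirlingPoly

namespace MvPolynomial

variable {σ R : Type*} [CommRing R]

theorem eval_polynomial_aeval (x : σ → R) (q : MvPolynomial σ R) (p : R[X]) :
    eval x (Polynomial.aeval q p) = p.eval (eval x q) := by
  rw [← coe_aeval_eq_eval, RingHom.coe_coe, ← Polynomial.aeval_algHom_apply]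
  rfl

theorem totalDegree_polynomial_aeval_le (q : MvPolynomial σ R) (p : R[X]) :
    (Polynomial.aeval q p).totalDegree ≤ p.natDegree * q.totalDegree := by
  rw [Polynomial.aeval_eq_sum_range]
  refine totalDegree_finsetSum_le fun i hi => ?_
  calc (p.coeff i • q ^ i).totalDegree ≤ (q ^ i).totalDegree := totalDegree_smul_le _ _
    _ ≤ i * q.totalDegree := totalDegree_pow _ _
    _ ≤ p.natDegree * q.totalDegree := by gcongr; exact Nat.lt_succ_iff.1 (mem_range.1 hi)

variable [DecidableEq σ]

theorem eval_aeval_update_X_zero (x : σ → R) (i : σ) (p : MvPolynomial σ R) :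
    eval x (aeval (Function.update X i 0) p) = eval (Function.update x i 0) p := by
  change aeval x (aeval _ p) = aeval _ p
  rw [comp_aeval_apply]
  congr 1
  ext j
  obtain rfl | hj := eq_or_ne j i <;> simp [*]

theorem coeff_aeval_update_X_zero {i : σ} {m : σ →₀ ℕ} (hm : m i = 0) (p : MvPolynomial σ R) :
    coeff m (aeval (Function.update X i 0) p) = coeff m p := by
  induction p using MvPolynomial.induction_on' with
  | monomial n c =>
    rw [aeval_monomial]
    by_cases hn : n i = 0
    · have : (n.prod fun j k => Function.update (X : σ → MvPolynomial σ R) i 0 j ^ k) =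
          n.prod fun j k => X j ^ k := Finsupp.prod_congr fun j hj => by
        rw [Function.update_of_ne (by rintro rfl; exact Finsupp.mem_support_iff.1 hj hn)]
      rw [this, algebraMap_eq, ← monomial_eq]
    · rw [Finsupp.prod, prod_eq_zero (Finsupp.mem_support_iff.2 hn) (by simp [hn]), mul_zero,
        coeff_zero, coeff_monomial, if_neg (by rintro rfl; exact hn hm)]
  | add p q hp hq => simp only [map_add, coeff_add, hp, hq]

theorem eq_zero_of_totalDegree_lt_of_eval_eq_zero [IsDomain R] [Infinite R] {p : MvPolynomial σ R}
    (S : Finset σ) (hdeg : p.totalDegree < S.card)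
    (hp : ∀ i ∈ S, ∀ x : σ → R, x i = 0 → eval x p = 0) : p = 0 := by
  refine ext _ _ fun m => by_contra fun hm => hdeg.not_ge ?_
  have hpos (i) (hi : i ∈ S) : m i ≠ 0 := fun hmi => hm <| by
    have hsubst : aeval (Function.update X i 0) p = 0 := MvPolynomial.funext fun x => by
      rw [eval_aeval_update_X_zero, map_zero, hp i hi _ (Function.update_self _ _ _)]
    rw [← coeff_aeval_update_X_zero hmi, hsubst]
  calc S.card = S.card • 1 := by rw [smul_eq_mul, mul_one]
    _ ≤ ∑ i ∈ S, m i := card_nsmul_le_sum _ _ _ fun i hi => Nat.one_le_iff_ne_zero.2 (hpos i hi)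
    _ ≤ m.sum fun _ e => e :=
      sum_le_sum_of_subset fun i hi => Finsupp.mem_support_iff.2 (hpos i hi)
    _ ≤ p.totalDegree := le_totalDegree (mem_support_iff.2 hm)

end MvPolynomial

section Configurations

variable {α : Type*} [DecidableEq α]

def weightedConfigs (S : Finset α) (w r : ℕ) : Finset (Fin r → Finset α × ℕ) :=
  (Fintype.piFinset fun _ : Fin r => S.powerset ×ˢ range (w + 1)).filter
    (fun f => (∀ i, (f i).1.Nonempty) ∧ (∀ i j, i ≠ j → Disjoint (f i).1 (f j).1) ∧
      univ.biUnion (fun i => (f i).1) = S ∧ ∑ i, (f i).2 = w)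

variable {S : Finset α} {w r : ℕ}

theorem mem_weightedConfigs {f : Fin r → Finset α × ℕ} :
    f ∈ weightedConfigs S w r ↔ (∀ i, (f i).1.Nonempty) ∧
      (∀ i j, i ≠ j → Disjoint (f i).1 (f j).1) ∧ (∀ a, (∃ i, a ∈ (f i).1) ↔ a ∈ S) ∧
      ∑ i, (f i).2 = w := by
  simp only [weightedConfigs, mem_filter, Fintype.mem_piFinset, mem_product, mem_powerset,
    mem_range, Finset.ext_iff, mem_biUnion, mem_univ, true_and]
  constructor
  · rintro ⟨-, h⟩
    exact h
  · rintro ⟨hne, hdisj, hcover, hsum⟩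
    refine ⟨fun i => ⟨fun a ha => (hcover a).1 ⟨i, ha⟩, ?_⟩, hne, hdisj, hcover, hsum⟩
    rw [Nat.lt_succ_iff, ← hsum]
    exact single_le_sum (f := fun i => (f i).2) (fun _ _ => Nat.zero_le _) (mem_univ i)

theorem subset_of_mem_weightedConfigs {f : Fin r → Finset α × ℕ} (hf : f ∈ weightedConfigs S w r)
    (i : Fin r) : (f i).1 ⊆ S :=
  fun _ ha => ((mem_weightedConfigs.1 hf).2.2.1 _).1 ⟨i, ha⟩

theorem weightedConfigs_zero (hS : S.Nonempty) : weightedConfigs S w 0 = ∅ := by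
  refine eq_empty_of_forall_notMem fun f hf => ?_
  obtain ⟨a, ha⟩ := hS
  obtain ⟨i, -⟩ := ((mem_weightedConfigs.1 hf).2.2.1 a).2 ha
  exact i.elim0

theorem weightedConfigs_eq_empty_of_card_lt (h : S.card < r) : weightedConfigs S w r = ∅ := by
  refine eq_empty_of_forall_notMem fun f hf => h.not_ge ?_
  obtain ⟨hne, hdisj, hcover, -⟩ := mem_weightedConfigs.1 hf
  have := card_le_card_of_injOn (s := univ) (fun i => (hne i).choose)
    (fun i _ => (hcover _).1 ⟨i, (hne i).choose_spec⟩)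
    (fun i _ j _ hij => by_contra fun hne' => disjoint_left.1 (hdisj i j hne')
      (hne i).choose_spec (by simp only at hij; exact hij ▸ (hne j).choose_spec))
  simpa using this


theorem removeNth_mem_weightedConfigs_erase {i₀ : α} {l : Fin (r + 1)}
    {f : Fin (r + 1) → Finset α × ℕ} (hf : f ∈ weightedConfigs S w (r + 1))
    (hl : f l = ({i₀}, 0)) : l.removeNth f ∈ weightedConfigs (S.erase i₀) w r := by
  obtain ⟨hne, hdisj, hcover, hsum⟩ := mem_weightedConfigs.1 hf
  have hi₀l : i₀ ∈ (f l).1 := by simp [hl]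
  refine mem_weightedConfigs.2 ⟨fun j => hne _, fun i j hij => hdisj _ _ (by simpa using hij),
    fun a => ?_, ?_⟩
  · simp only [Fin.removeNth, mem_erase, ← hcover]
    constructor
    · rintro ⟨j, hj⟩
      exact ⟨fun h => disjoint_left.1 (hdisj _ _ (Fin.succAbove_ne l j)) hj (h ▸ hi₀l), _, hj⟩
    · rintro ⟨ha, i, hi⟩
      obtain rfl | ⟨j, rfl⟩ := Fin.eq_self_or_eq_succAbove l i
      · simp [hl] at hi
        exact absurd hi ha
      · exact ⟨j, hi⟩
  · rw [Fin.sum_univ_succAbove _ l, hl, zero_add] at hsum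
    exact hsum

theorem insertNth_mem_weightedConfigs {i₀ : α} (hi₀ : i₀ ∈ S) (l : Fin (r + 1))
    {g : Fin r → Finset α × ℕ} (hg : g ∈ weightedConfigs (S.erase i₀) w r) :
    Fin.insertNth (α := fun _ => Finset α × ℕ) l ({i₀}, 0) g ∈ weightedConfigs S w (r + 1) := by
  obtain ⟨hne, hdisj, hcover, hsum⟩ := mem_weightedConfigs.1 hg
  have hi₀g (j : Fin r) : i₀ ∉ (g j).1 := fun h => by
    simpa using subset_of_mem_weightedConfigs hg j h
  refine mem_weightedConfigs.2 ⟨?_, fun i j hij => ?_, fun a => ?_, ?_⟩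
  · simp [Fin.forall_iff_succAbove l, hne]
  · cases i using Fin.succAboveCases l with
    | x => cases j using Fin.succAboveCases l with
      | x => exact absurd rfl hij
      | p j => simpa using hi₀g j
    | p i => cases j using Fin.succAboveCases l with
      | x => simpa using hi₀g i
      | p j => simpa using hdisj i j (ne_of_apply_ne _ hij)
  · by_cases ha : a = i₀ <;> simp [Fin.exists_iff_succAbove l, hcover, ha, hi₀]
  · simp [Fin.sum_univ_succAbove _ l, hsum]

variable {β : Type*} [AddCommMonoid β]

theorem sum_weightedConfigs_eq_sum_filter_mem {i₀ : α} (hi₀ : i₀ ∈ S)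
    (F : (Fin r → Finset α × ℕ) → β) :
    ∑ f ∈ weightedConfigs S w r, F f =
      ∑ l, ∑ f ∈ (weightedConfigs S w r).filter (fun f => i₀ ∈ (f l).1), F f := by
  simp_rw [sum_filter]
  rw [sum_comm]
  refine sum_congr rfl fun f hf => ?_
  obtain ⟨-, hdisj, hcover, -⟩ := mem_weightedConfigs.1 hf
  obtain ⟨l, hl⟩ := (hcover i₀).2 hi₀
  rw [sum_eq_single_of_mem l (mem_univ l), if_pos hl]
  intro j _ hj
  rw [if_neg fun hj' => disjoint_left.1 (hdisj j l hj) hj' hl]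

theorem sum_removeNth_filter_singleton_part {i₀ : α} (hi₀ : i₀ ∈ S) (l : Fin (r + 1))
    (F : (Fin r → Finset α × ℕ) → β) :
    ∑ f ∈ (weightedConfigs S w (r + 1)).filter (fun f => f l = ({i₀}, 0)), F (l.removeNth f) =
      ∑ g ∈ weightedConfigs (S.erase i₀) w r, F g := by
  refine sum_nbij' l.removeNth (Fin.insertNth (α := fun _ => Finset α × ℕ) l ({i₀}, 0))
    (fun f hf => ?_) (fun g hg => ?_) (fun f hf => ?_) (fun g _ => Fin.removeNth_insertNth _ _ _)
    (fun _ _ => rfl)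
  · obtain ⟨hf, hl⟩ := mem_filter.1 hf
    exact removeNth_mem_weightedConfigs_erase hf hl
  · exact mem_filter.2 ⟨insertNth_mem_weightedConfigs hi₀ l hg, by simp⟩
  · rw [← (mem_filter.1 hf).2, Fin.insertNth_self_removeNth]

def eraseParts (a : α) (f : Fin r → Finset α × ℕ) : Fin r → Finset α × ℕ :=
  fun i => ((f i).1.erase a, (f i).2)

def insertPart (l : Fin r) (a : α) (g : Fin r → Finset α × ℕ) : Fin r → Finset α × ℕ :=
  fun i => (if i = l then insert a (g i).1 else (g i).1, (g i).2)

theorem eraseParts_mem_weightedConfigs {i₀ : α} {l : Fin r} {f : Fin r → Finset α × ℕ}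
    (hf : f ∈ weightedConfigs S w r) (hl : i₀ ∈ (f l).1) (hns : (f l).1 ≠ {i₀}) :
    eraseParts i₀ f ∈ weightedConfigs (S.erase i₀) w r := by
  obtain ⟨hne, hdisj, hcover, hsum⟩ := mem_weightedConfigs.1 hf
  refine mem_weightedConfigs.2 ⟨fun i => ?_, fun i j hij => ?_, fun a => ?_, hsum⟩
  · obtain rfl | hi := eq_or_ne i l
    · exact ((nontrivial_iff_ne_singleton hl).2 hns).erase_nonempty
    · rw [eraseParts, erase_eq_of_notMem fun h => disjoint_left.1 (hdisj i l hi) h hl]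
      exact hne i
  · exact (hdisj i j hij).mono (erase_subset _ _) (erase_subset _ _)
  · simp [eraseParts, ← hcover]

theorem insertPart_mem_weightedConfigs {i₀ : α} (hi₀ : i₀ ∈ S) (l : Fin r)
    {g : Fin r → Finset α × ℕ} (hg : g ∈ weightedConfigs (S.erase i₀) w r) :
    insertPart l i₀ g ∈ weightedConfigs S w r := by
  obtain ⟨hne, hdisj, hcover, hsum⟩ := mem_weightedConfigs.1 hg
  have hi₀g (j : Fin r) : i₀ ∉ (g j).1 := fun h => by
    simpa using subset_of_mem_weightedConfigs hg j h
  refine mem_weightedConfigs.2 ⟨fun i => ?_, fun i j hij => ?_, fun a => ?_, hsum⟩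
  · simp only [insertPart]
    split_ifs
    exacts [insert_nonempty _ _, hne i]
  · simp only [insertPart]
    split_ifs with hi hj hj
    · exact absurd (hi.trans hj.symm) hij
    · simpa [hi₀g j] using hdisj i j hij
    · simpa [hi₀g i] using hdisj i j hij
    · exact hdisj i j hij
  · have hmem (i : Fin r) : a ∈ (insertPart l i₀ g i).1 ↔ i = l ∧ a = i₀ ∨ a ∈ (g i).1 := by
      simp only [insertPart]
      split_ifs with h <;> simp [h]
    obtain rfl | ha := eq_or_ne a i₀
    · simp [hmem, hi₀]
    · simp [hmem, ha, hcover]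

theorem sum_eraseParts_filter_nonsingleton_part {i₀ : α} (hi₀ : i₀ ∈ S) (l : Fin r)
    (F : (Fin r → Finset α × ℕ) → β) :
    ∑ f ∈ (weightedConfigs S w r).filter (fun f => i₀ ∈ (f l).1 ∧ (f l).1 ≠ {i₀}),
        F (eraseParts i₀ f) =
      ∑ g ∈ weightedConfigs (S.erase i₀) w r, F g := by
  refine sum_nbij' (eraseParts i₀) (insertPart l i₀) (fun f hf => ?_) (fun g hg => ?_)
    (fun f hf => ?_) (fun g hg => ?_) (fun _ _ => rfl)
  · obtain ⟨hf, hl, hns⟩ := mem_filter.1 hf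
    exact eraseParts_mem_weightedConfigs hf hl hns
  · obtain ⟨b, hb⟩ := (mem_weightedConfigs.1 hg).1 l
    have hb₀ : b ≠ i₀ := (mem_erase.1 (subset_of_mem_weightedConfigs hg l hb)).1
    refine mem_filter.2 ⟨insertPart_mem_weightedConfigs hi₀ l hg, by simp [insertPart], ?_⟩
    simpa [insertPart] using ne_of_mem_of_not_mem' (mem_insert_of_mem hb) (by simpa using hb₀)
  · obtain ⟨hf, hl, -⟩ := mem_filter.1 hf
    have hdisj := (mem_weightedConfigs.1 hf).2.1
    ext i : 1
    obtain rfl | hi := eq_or_ne i l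
    · simp [eraseParts, insertPart, hl]
    · simp [eraseParts, insertPart, hi,
        erase_eq_of_notMem fun h => disjoint_left.1 (hdisj i l hi) h hl]
  · have hi₀g (j : Fin r) : i₀ ∉ (g j).1 := fun h => by
      simpa using subset_of_mem_weightedConfigs hg j h
    ext i : 1
    simp only [eraseParts, insertPart]
    split_ifs <;> simp [erase_eq_of_notMem, hi₀g]

end Configurations

section Evaluation

variable {α : Type*} (P : ℕ → ℝ[X]) (x : α → ℝ)

noncomputable def configProd {r : ℕ} (f : Fin r → Finset α × ℕ) : ℝ :=
  ∏ i, (P (f i).2).eval (∑ c ∈ (f i).1, x c)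

variable [DecidableEq α]

noncomputable def configSum (S : Finset α) (w : ℕ) : ℝ :=
  ∑ r ∈ range (S.card + 1), ∑ f ∈ weightedConfigs S w r,
    (-1 : ℝ) ^ r * (1 / (r : ℝ)) * configProd P x f

variable {P x}

omit [DecidableEq α] in
theorem configProd_eq_mul_removeNth {r : ℕ} (f : Fin (r + 1) → Finset α × ℕ) (l : Fin (r + 1)) :
    configProd P x f = (P (f l).2).eval (∑ c ∈ (f l).1, x c) * configProd P x (l.removeNth f) :=
  Fin.prod_univ_succAbove _ l

theorem configProd_eraseParts {r : ℕ} {i₀ : α} (hx : x i₀ = 0) (f : Fin r → Finset α × ℕ) :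
    configProd P x (eraseParts i₀ f) = configProd P x f := by
  simp only [configProd, eraseParts, sum_erase _ hx]

variable {S : Finset α} {w : ℕ} {i₀ : α}

/-- Removing a zero coordinate `i₀` from a configuration either deletes its part `{i₀}` (which
must then carry weight `0`, as `P_u(0) = 0` for `u ≠ 0`) or shrinks a larger part without
changing its sum; either way one of the `r + 1` parts is singled out. -/
theorem sum_configProd_succ (hP₀ : P 0 = 1) (hP : ∀ u ≠ 0, (P u).eval 0 = 0)
    (hi₀ : i₀ ∈ S) (hx : x i₀ = 0) (r : ℕ) :
    ∑ f ∈ weightedConfigs S w (r + 1), configProd P x f =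
      (r + 1) * (∑ g ∈ weightedConfigs (S.erase i₀) w r, configProd P x g +
        ∑ g ∈ weightedConfigs (S.erase i₀) w (r + 1), configProd P x g) := by
  have hpart (l : Fin (r + 1)) :
      ∑ f ∈ (weightedConfigs S w (r + 1)).filter (fun f => i₀ ∈ (f l).1), configProd P x f =
        ∑ g ∈ weightedConfigs (S.erase i₀) w r, configProd P x g +
          ∑ g ∈ weightedConfigs (S.erase i₀) w (r + 1), configProd P x g := by
    have hsingleton :
        ∑ f ∈ (weightedConfigs S w (r + 1)).filter (fun f => i₀ ∈ (f l).1 ∧ (f l).1 = {i₀}),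
          configProd P x f =
        ∑ f ∈ (weightedConfigs S w (r + 1)).filter (fun f => f l = ({i₀}, 0)),
          configProd P x (l.removeNth f) := by
      rw [sum_filter, sum_filter]
      refine sum_congr rfl fun f _ => ?_
      rw [configProd_eq_mul_removeNth f l]
      by_cases hB : (f l).1 = {i₀}
      · by_cases hu : (f l).2 = 0
        · simp [hB, hu, Prod.ext_iff, hx, hP₀]
        · simp [hB, hu, Prod.ext_iff, hx, hP _ hu]
      · simp [hB, Prod.ext_iff]
    have hnonsingleton :
        ∑ f ∈ (weightedConfigs S w (r + 1)).filter (fun f => i₀ ∈ (f l).1 ∧ ¬(f l).1 = {i₀}),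
          configProd P x f =
        ∑ g ∈ weightedConfigs (S.erase i₀) w (r + 1), configProd P x g := by
      rw [← sum_eraseParts_filter_nonsingleton_part hi₀ l]
      exact sum_congr rfl fun f _ => (configProd_eraseParts hx f).symm
    rw [← sum_filter_add_sum_filter_not _ (fun f => (f l).1 = {i₀}), filter_filter, filter_filter,
      hsingleton, hnonsingleton, sum_removeNth_filter_singleton_part hi₀]
  rw [sum_weightedConfigs_eq_sum_filter_mem hi₀]
  simp [hpart, mul_add]

/-- By `sum_configProd_succ` the `r`-th term of `configSum` is `a (r + 1) - a r` with
`a k = (-1)^k ∑_{g} configProd P x g` over the configurations of `S.erase i₀` with `k` parts; the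
sum telescopes to `a |S| - a 0`, and both vanish because `S.erase i₀` is nonempty and has fewer
than `|S|` elements. -/
theorem configSum_eq_zero_of_apply_eq_zero (hP₀ : P 0 = 1) (hP : ∀ u ≠ 0, (P u).eval 0 = 0)
    (hS : 1 < S.card) (hi₀ : i₀ ∈ S) (hx : x i₀ = 0) : configSum P x S w = 0 := by
  set a : ℕ → ℝ := fun k => (-1) ^ k * ∑ g ∈ weightedConfigs (S.erase i₀) w k, configProd P x g
  have hterm (k : ℕ) : ∑ f ∈ weightedConfigs S w (k + 1),
      (-1 : ℝ) ^ (k + 1) * (1 / ((k + 1 : ℕ) : ℝ)) * configProd P x f = a (k + 1) - a k := by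
    rw [← mul_sum, sum_configProd_succ hP₀ hP hi₀ hx]
    simp only [a]
    push_cast
    field_simp
    ring
  have hcard : (S.erase i₀).card < S.card := card_erase_lt_of_mem hi₀
  have hne : (S.erase i₀).Nonempty := by
    rw [← card_pos, card_erase_of_mem hi₀]
    omega
  rw [configSum, sum_range_succ', sum_congr rfl fun k _ => hterm k, sum_range_sub,
    weightedConfigs_zero (card_pos.1 (by omega)), sum_empty, add_zero]
  simp [a, weightedConfigs_zero hne, weightedConfigs_eq_empty_of_card_lt hcard]

end Evaluation

section ConfigPoly

variable {α : Type*} [DecidableEq α] (P : ℕ → ℝ[X])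

noncomputable def configPoly (S : Finset α) (w : ℕ) : MvPolynomial α ℝ :=
  ∑ r ∈ range (S.card + 1), ∑ f ∈ weightedConfigs S w r,
    MvPolynomial.C ((-1 : ℝ) ^ r * (1 / (r : ℝ))) *
      ∏ i, aeval (∑ c ∈ (f i).1, MvPolynomial.X c) (P (f i).2)

variable {P}

theorem eval_configPoly (x : α → ℝ) (S : Finset α) (w : ℕ) :
    MvPolynomial.eval x (configPoly P S w) = configSum P x S w := by
  simp [configPoly, configSum, configProd, MvPolynomial.eval_polynomial_aeval]

theorem totalDegree_configPoly_le (hP : ∀ u, (P u).natDegree ≤ 2 * u) (S : Finset α) (w : ℕ) :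
    (configPoly P S w).totalDegree ≤ 2 * w := by
  refine MvPolynomial.totalDegree_finsetSum_le fun r _ =>
    MvPolynomial.totalDegree_finsetSum_le fun f hf => ?_
  refine (MvPolynomial.totalDegree_mul _ _).trans ?_
  rw [MvPolynomial.totalDegree_C, zero_add, ← (mem_weightedConfigs.1 hf).2.2.2, mul_sum]
  refine (MvPolynomial.totalDegree_finsetProd _ _).trans (sum_le_sum fun i _ => ?_)
  calc _ ≤ (P (f i).2).natDegree * 1 := (MvPolynomial.totalDegree_polynomial_aeval_le _ _).trans
        (Nat.mul_le_mul_left _ (MvPolynomial.totalDegree_finsetSum_le fun c _ =>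
          (MvPolynomial.totalDegree_X c).le))
    _ ≤ 2 * (f i).2 := by rw [mul_one]; exact hP _

end ConfigPoly

theorem configSum_eq_zero {α : Type*} [DecidableEq α] {P : ℕ → ℝ[X]} (hP : IsStirlingPoly P)
    (x : α → ℝ) {S : Finset α} {w : ℕ} (hS : 1 < S.card) (hw : 2 * w < S.card) :
    configSum P x S w = 0 := by
  have hpoly : configPoly P S w = 0 :=
    MvPolynomial.eq_zero_of_totalDegree_lt_of_eval_eq_zero S
      ((totalDegree_configPoly_le (fun u => (hP u).1) S w).trans_lt hw) fun i hi y hy => by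
        rw [eval_configPoly]
        exact configSum_eq_zero_of_apply_eq_zero hP.apply_zero
          (fun u hu => hP.eval_zero_of_ne_zero hu) hS hi hy
  rw [← eval_configPoly, hpoly, map_zero]

theorem weightedConfigSum_eq_zero {P : ℕ → ℝ[X]} (hP : IsStirlingPoly P) {S : Finset ℝ} {w : ℕ}
    (hS : 1 < S.card) (hw : 2 * w < S.card) : weightedConfigSum P S w = 0 :=
  -- `weightedConfigSum P S w` unfolds to `configSum P id S w`, up to decidability instances
  configSum_eq_zero hP id hS hw

theorem weighted_config_identity_g7_w3 (P : ℕ → Polynomial ℝ) (hP : IsStirlingPoly P)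
    (S : Finset ℝ) (hS : S.card = 7) :
    weightedConfigSum P S 3 = 0 :=
  weightedConfigSum_eq_zero hP (by omega) (by omega)
end
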